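/- arXiv:2603.02527 — 2 statements merged into one kernel-verified Lean document; each statement's English description precedes it below -/
import Mathlib

section
/- Let p > 1 be an integer and 𝔤 the gap-p Virasoro algebra, φ ∈ 𝔥* with J = {1 ≤ i ≤ p−1 : φ(C_i) ≠ 0} nonempty. Then the Verma 𝔤-module M_{𝔤,φ} is isomorphic, as a 𝔤-module, to the tensor product (M_{𝔥_J,φ})^𝔤 ⊗ (M_{𝔤_{J^C},ψ})^e. -/
open scoped TensorProduct

universe u v

/-! ### The gap-`p` Virasoro algebra -/

/-- Index type for the distinguished basis of the gap-`p` Virasoro algebra. -/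
inductive GapIdx (p : ℕ) : Type
  | L : ℤ → GapIdx p
  | I : ℤ → {i : ℕ // 1 ≤ i ∧ i ≤ p - 1} → GapIdx p
  | C : {j : ℕ // j ≤ p / 2} → GapIdx p

/-- A realization of the gap-`p` Virasoro algebra on a complex Lie algebra `g`:
distinguished elements `L n`, `I n i` (`1 ≤ i ≤ p-1`), `C j` (`0 ≤ j ≤ p-1`, with
`C (p - i) = C i`) forming a basis, subject to the defining bracket relations. -/
structure GapVirasoro (p : ℕ) (g : Type u) [LieRing g] [LieAlgebra ℂ g] where
  L : ℤ → g
  I : ℤ → ℕ → g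
  C : ℕ → g
  C_symm : ∀ i : ℕ, 1 ≤ i → i ≤ p - 1 → C (p - i) = C i
  basis : Module.Basis (GapIdx p) ℂ g
  basis_L : ∀ n : ℤ, basis (GapIdx.L n) = L n
  basis_I : ∀ (n : ℤ) (i : {i : ℕ // 1 ≤ i ∧ i ≤ p - 1}), basis (GapIdx.I n i) = I n i.1
  basis_C : ∀ j : {j : ℕ // j ≤ p / 2}, basis (GapIdx.C j) = C j.1
  bracket_LL : ∀ m n : ℤ, ⁅L m, L n⁆ =
    ((m : ℂ) - (n : ℂ)) • L (m + n) +
      (if m + n = 0 then ((1 : ℂ) / 12 * ((m : ℂ) ^ 3 - (m : ℂ))) • C 0 else 0)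
  bracket_LI : ∀ (m n : ℤ) (i : ℕ), 1 ≤ i → i ≤ p - 1 →
    ⁅L m, I n i⁆ = (-((n : ℂ) + (i : ℂ) / (p : ℂ))) • I (m + n) i
  bracket_II : ∀ (m n : ℤ) (i j : ℕ), 1 ≤ i → i ≤ p - 1 → 1 ≤ j → j ≤ p - 1 →
    ⁅I m i, I n j⁆ =
      if i + j = p ∧ m + n + 1 = 0 then ((m : ℂ) + (i : ℂ) / (p : ℂ)) • C (min i (p - i)) else 0
  central_C : ∀ j : ℕ, j ≤ p - 1 → ∀ x : g, ⁅C j, x⁆ = 0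

/-- A weight for the gap-`p` Virasoro algebra: an element of `𝔥*`, recorded by its values
on `L 0` and on the `C j`. -/
structure GapWeight (p : ℕ) where
  L0 : ℂ
  C : ℕ → ℂ
  symm : ∀ i : ℕ, 1 ≤ i → i ≤ p - 1 → C (p - i) = C i

namespace GapWeight

variable {p : ℕ}

instance : Neg (GapWeight p) :=
  ⟨fun φ => ⟨-φ.L0, fun i => -(φ.C i), fun i h1 h2 => by simp [φ.symm i h1 h2]⟩⟩

open scoped Classical in
/-- The set `J = {1 ≤ i ≤ p-1 : φ(C i) ≠ 0}`. -/
noncomputable def J (φ : GapWeight p) : Finset ℕ :=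
  (Finset.Icc 1 (p - 1)).filter fun i => φ.C i ≠ 0

open scoped Classical in
/-- The set `J^C = {1 ≤ i ≤ p-1 : φ(C i) = 0}`. -/
noncomputable def JC (φ : GapWeight p) : Finset ℕ :=
  (Finset.Icc 1 (p - 1)).filter fun i => φ.C i = 0

/-- `ψ(L 0) = φ(L 0) - ∑_{j ∈ J} j(p-j)/(4p²)`. -/
noncomputable def psiL0 (φ : GapWeight p) : ℂ :=
  φ.L0 - ∑ j ∈ φ.J, (j : ℂ) * ((p : ℂ) - (j : ℂ)) / (4 * (p : ℂ) ^ 2)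

/-- `ψ(C 0) = φ(C 0) - |J|`. -/
noncomputable def psiC0 (φ : GapWeight p) : ℂ := φ.C 0 - (φ.J.card : ℂ)

end GapWeight

/-! ### Conjugate-linear anti-involutions and unitary modules -/

/-- A conjugate-linear anti-involution of a complex Lie algebra. -/
structure IsConjLinearAntiInvolution (g : Type u) [LieRing g] [LieAlgebra ℂ g]
    (θ : g → g) : Prop where
  invol : ∀ x, θ (θ x) = x
  map_add : ∀ x y, θ (x + y) = θ x + θ y
  map_smul : ∀ (a : ℂ) (x : g), θ (a • x) = (starRingEnd ℂ a) • θ x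
  map_lie : ∀ x y, θ ⁅x, y⁆ = ⁅θ y, θ x⁆

/-- `B` is a positive definite Hermitian form on the `g`-module `M` which is contravariant
with respect to the conjugate-linear anti-involution `θ`, i.e. `⟨x•u, v⟩ = ⟨u, θ(x)•v⟩`. -/
def IsUnitaryPairing (g : Type u) [LieRing g] [LieAlgebra ℂ g]
    {M : Type v} [AddCommGroup M] [Module ℂ M] [LieRingModule g M]
    (θ : g → g) (B : M → M → ℂ) : Prop :=
  (∀ u v w : M, B (u + v) w = B u w + B v w) ∧
  (∀ (a : ℂ) (u v : M), B (a • u) v = a * B u v) ∧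
  (∀ u v : M, B v u = starRingEnd ℂ (B u v)) ∧
  (∀ v : M, v ≠ 0 → 0 < (B v v).re) ∧
  (∀ (x : g) (u v : M), B ⁅x, u⁆ v = B u ⁅θ x, v⁆)

/-- The `g`-module `M` is unitary for the conjugate-linear anti-involution `θ`. -/
def IsUnitaryRep (g : Type u) [LieRing g] [LieAlgebra ℂ g]
    (θ : g → g) (M : Type v) [AddCommGroup M] [Module ℂ M] [LieRingModule g M] : Prop :=
  ∃ B : M → M → ℂ, IsUnitaryPairing g θ B

/-- Irreducibility of a Lie module (nonzero, and no proper nonzero Lie submodules). -/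
def LieIrreducible (g : Type u) [LieRing g] [LieAlgebra ℂ g]
    (M : Type v) [AddCommGroup M] [Module ℂ M] [LieRingModule g M] : Prop :=
  (∃ u : M, u ≠ 0) ∧ ∀ U : LieSubmodule ℂ g M, U = ⊥ ∨ U = ⊤

/-! ### Representations of the Heisenberg subalgebra `𝔥_J` by operators -/

/-- A representation of the Heisenberg algebra `𝔥_J` on a complex vector space `N`,
given by operators satisfying the defining relations. -/
structure HeisRep (p : ℕ) (J : Finset ℕ) (N : Type v) [AddCommGroup N] [Module ℂ N] where
  I : ℤ → ℕ → Module.End ℂ N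
  C : ℕ → Module.End ℂ N
  C_symm : ∀ i ∈ J, C (p - i) = C i
  comm_II : ∀ (m n : ℤ) (i j : ℕ), i ∈ J → j ∈ J →
    ⁅I m i, I n j⁆ =
      if i + j = p ∧ m + n + 1 = 0 then ((m : ℂ) + (i : ℂ) / (p : ℂ)) • C (min i (p - i)) else 0
  central_CI : ∀ (m : ℤ) (i j : ℕ), i ∈ J → j ∈ J → ⁅C j, I m i⁆ = 0
  central_CC : ∀ i j : ℕ, i ∈ J → j ∈ J → ⁅C j, C i⁆ = 0

namespace HeisRep

variable {p : ℕ} {J : Finset ℕ} {N : Type v} [AddCommGroup N] [Module ℂ N]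

/-- `v` is a highest weight vector of weight `c` for the Heisenberg representation. -/
def IsHWVector (ρ : HeisRep p J N) (c : ℕ → ℂ) (v : N) : Prop :=
  (∀ n : ℤ, 0 ≤ n → ∀ i ∈ J, ρ.I n i v = 0) ∧ (∀ i ∈ J, ρ.C i v = c i • v)

/-- `(N, v)` is the Verma module for `𝔥_J` of highest weight `c`, characterized by the
universal property of `U(𝔥_J) ⊗ ℂv`. -/
def IsVerma (ρ : HeisRep p J N) (c : ℕ → ℂ) (v : N) : Prop :=
  ρ.IsHWVector c v ∧
  ∀ (N' : Type v) [AddCommGroup N'] [Module ℂ N'] (ρ' : HeisRep p J N') (w : N'),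
    ρ'.IsHWVector c w →
    ∃! f : N →ₗ[ℂ] N', f v = w ∧
      (∀ (m : ℤ) (i : ℕ), i ∈ J → ∀ u : N, f (ρ.I m i u) = ρ'.I m i (f u)) ∧
      (∀ i ∈ J, ∀ u : N, f (ρ.C i u) = ρ'.C i (f u))

/-- A subspace invariant under the Heisenberg action. -/
def Invariant (ρ : HeisRep p J N) (W : Submodule ℂ N) : Prop :=
  (∀ (m : ℤ) (i : ℕ), i ∈ J → ∀ u ∈ W, ρ.I m i u ∈ W) ∧
  (∀ i ∈ J, ∀ u ∈ W, ρ.C i u ∈ W)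

/-- Irreducibility of a Heisenberg representation. -/
def IsIrreducible (ρ : HeisRep p J N) : Prop :=
  (∃ u : N, u ≠ 0) ∧ ∀ W : Submodule ℂ N, ρ.Invariant W → W = ⊥ ∨ W = ⊤

end HeisRep

/-! ### Representations of the subalgebra `𝔤_{J^C}` by operators -/

/-- A representation of the subalgebra `𝔤_{J^C}` on a complex vector space `N`, given by
operators satisfying the defining relations. -/
structure GJCRep (p : ℕ) (JC : Finset ℕ) (N : Type v) [AddCommGroup N] [Module ℂ N] where
  L : ℤ → Module.End ℂ N
  I : ℤ → ℕ → Module.End ℂ N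
  C0 : Module.End ℂ N
  C : ℕ → Module.End ℂ N
  C_symm : ∀ i ∈ JC, C (p - i) = C i
  comm_LL : ∀ m n : ℤ, ⁅L m, L n⁆ =
    ((m : ℂ) - (n : ℂ)) • L (m + n) +
      (if m + n = 0 then ((1 : ℂ) / 12 * ((m : ℂ) ^ 3 - (m : ℂ))) • C0 else 0)
  comm_LI : ∀ (m n : ℤ) (i : ℕ), i ∈ JC →
    ⁅L m, I n i⁆ = (-((n : ℂ) + (i : ℂ) / (p : ℂ))) • I (m + n) i
  comm_II : ∀ (m n : ℤ) (i j : ℕ), i ∈ JC → j ∈ JC →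
    ⁅I m i, I n j⁆ =
      if i + j = p ∧ m + n + 1 = 0 then ((m : ℂ) + (i : ℂ) / (p : ℂ)) • C (min i (p - i)) else 0
  central_C0 : ∀ m : ℤ, ⁅C0, L m⁆ = 0 ∧ ∀ i ∈ JC, ⁅C0, I m i⁆ = 0
  central_C : ∀ j ∈ JC, (∀ m : ℤ, ⁅C j, L m⁆ = 0) ∧ (∀ (m : ℤ), ∀ i ∈ JC, ⁅C j, I m i⁆ = 0) ∧
    ⁅C j, C0⁆ = 0 ∧ ∀ i ∈ JC, ⁅C j, C i⁆ = 0

namespace GJCRep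

variable {p : ℕ} {JC : Finset ℕ} {N : Type v} [AddCommGroup N] [Module ℂ N]

/-- `v` is a highest weight vector of weight `ψ` (with `ψ(L 0) = h`, `ψ(C 0) = c`,
`ψ(C i) = 0` for `i ∈ J^C`). -/
def IsHWVector (ρ : GJCRep p JC N) (h c : ℂ) (v : N) : Prop :=
  (∀ n : ℤ, 0 < n → ρ.L n v = 0) ∧ (∀ n : ℤ, 0 ≤ n → ∀ i ∈ JC, ρ.I n i v = 0) ∧
  ρ.L 0 v = h • v ∧ ρ.C0 v = c • v ∧ (∀ i ∈ JC, ρ.C i v = 0)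

/-- `(N, v)` is the Verma module for `𝔤_{J^C}` of highest weight `ψ`, characterized by the
universal property. -/
def IsVerma (ρ : GJCRep p JC N) (h c : ℂ) (v : N) : Prop :=
  ρ.IsHWVector h c v ∧
  ∀ (N' : Type v) [AddCommGroup N'] [Module ℂ N'] (ρ' : GJCRep p JC N') (w : N'),
    ρ'.IsHWVector h c w →
    ∃! f : N →ₗ[ℂ] N', f v = w ∧
      (∀ (m : ℤ) (u : N), f (ρ.L m u) = ρ'.L m (f u)) ∧
      (∀ (m : ℤ) (i : ℕ), i ∈ JC → ∀ u : N, f (ρ.I m i u) = ρ'.I m i (f u)) ∧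
      (∀ u : N, f (ρ.C0 u) = ρ'.C0 (f u)) ∧
      (∀ i ∈ JC, ∀ u : N, f (ρ.C i u) = ρ'.C i (f u))

/-- A subspace invariant under the `𝔤_{J^C}`-action. -/
def Invariant (ρ : GJCRep p JC N) (W : Submodule ℂ N) : Prop :=
  (∀ (m : ℤ), ∀ u ∈ W, ρ.L m u ∈ W) ∧
  (∀ (m : ℤ) (i : ℕ), i ∈ JC → ∀ u ∈ W, ρ.I m i u ∈ W) ∧
  (∀ u ∈ W, ρ.C0 u ∈ W) ∧ (∀ i ∈ JC, ∀ u ∈ W, ρ.C i u ∈ W)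

/-- Irreducibility of a `𝔤_{J^C}`-representation. -/
def IsIrreducible (ρ : GJCRep p JC N) : Prop :=
  (∃ u : N, u ≠ 0) ∧ ∀ W : Submodule ℂ N, ρ.Invariant W → W = ⊥ ∨ W = ⊤

end GJCRep

/-- Vectors obtained from `v` by repeatedly applying the operators `I m i` and `I m (p-i)`;
their span is `U(ℋ_{i,p-i})v`. -/
inductive GJCRep.Orbit {p : ℕ} {JC : Finset ℕ} {N : Type v} [AddCommGroup N] [Module ℂ N]
    (ρ : GJCRep p JC N) (i : ℕ) (v : N) : N → Prop
  | base : GJCRep.Orbit ρ i v v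
  | step_lo (m : ℤ) (u : N) : GJCRep.Orbit ρ i v u → GJCRep.Orbit ρ i v (ρ.I m i u)
  | step_hi (m : ℤ) (u : N) : GJCRep.Orbit ρ i v u → GJCRep.Orbit ρ i v (ρ.I m (p - i) u)

/-! ### Representations of the full gap-`p` Virasoro algebra by operators -/

/-- A representation of the gap-`p` Virasoro algebra on a complex vector space `N`,
given by operators satisfying the defining relations. -/
structure GapRep (p : ℕ) (N : Type v) [AddCommGroup N] [Module ℂ N] where
  L : ℤ → Module.End ℂ N
  I : ℤ → ℕ → Module.End ℂ N
  C : ℕ → Module.End ℂ N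
  C_symm : ∀ i : ℕ, 1 ≤ i → i ≤ p - 1 → C (p - i) = C i
  comm_LL : ∀ m n : ℤ, ⁅L m, L n⁆ =
    ((m : ℂ) - (n : ℂ)) • L (m + n) +
      (if m + n = 0 then ((1 : ℂ) / 12 * ((m : ℂ) ^ 3 - (m : ℂ))) • C 0 else 0)
  comm_LI : ∀ (m n : ℤ) (i : ℕ), 1 ≤ i → i ≤ p - 1 →
    ⁅L m, I n i⁆ = (-((n : ℂ) + (i : ℂ) / (p : ℂ))) • I (m + n) i
  comm_II : ∀ (m n : ℤ) (i j : ℕ), 1 ≤ i → i ≤ p - 1 → 1 ≤ j → j ≤ p - 1 →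
    ⁅I m i, I n j⁆ =
      if i + j = p ∧ m + n + 1 = 0 then ((m : ℂ) + (i : ℂ) / (p : ℂ)) • C (min i (p - i)) else 0
  central_C : ∀ j : ℕ, j ≤ p - 1 →
    (∀ m : ℤ, ⁅C j, L m⁆ = 0) ∧
    (∀ (m : ℤ) (i : ℕ), 1 ≤ i → i ≤ p - 1 → ⁅C j, I m i⁆ = 0) ∧
    (∀ k : ℕ, k ≤ p - 1 → ⁅C j, C k⁆ = 0)

namespace GapRep

variable {p : ℕ} {N : Type v} [AddCommGroup N] [Module ℂ N]

/-- Highest weight vector of weight `(hL, hC)`. -/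
def IsHWVector (ρ : GapRep p N) (hL : ℂ) (hC : ℕ → ℂ) (w : N) : Prop :=
  (∀ n : ℤ, 0 < n → ρ.L n w = 0) ∧
  (∀ n : ℤ, 0 ≤ n → ∀ i : ℕ, 1 ≤ i → i ≤ p - 1 → ρ.I n i w = 0) ∧
  ρ.L 0 w = hL • w ∧ (∀ j : ℕ, j ≤ p - 1 → ρ.C j w = hC j • w)

/-- A subspace invariant under the action. -/
def Invariant (ρ : GapRep p N) (W : Submodule ℂ N) : Prop :=
  (∀ m : ℤ, ∀ u ∈ W, ρ.L m u ∈ W) ∧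
  (∀ (m : ℤ) (i : ℕ), 1 ≤ i → i ≤ p - 1 → ∀ u ∈ W, ρ.I m i u ∈ W) ∧
  (∀ j : ℕ, j ≤ p - 1 → ∀ u ∈ W, ρ.C j u ∈ W)

/-- Irreducibility. -/
def IsIrreducible (ρ : GapRep p N) : Prop :=
  (∃ u : N, u ≠ 0) ∧ ∀ W : Submodule ℂ N, ρ.Invariant W → W = ⊥ ∨ W = ⊤

end GapRep

/-! ### The normally ordered `L n`-action formula -/

/-- The action `∑_{j∈J} (1/(2 c j)) ∑_k :I_k^j I_{n-k-1}^{p-j}: + δ_{n,0} ∑_{j∈J} j(p-j)/(4p²)`,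
for a family of operators `Iop`.  The inner (finitary) sum over `k ∈ ℤ` is a `finsum`. -/
noncomputable def gapLnFormula {M : Type v} [AddCommGroup M] [Module ℂ M]
    (p : ℕ) (J : Finset ℕ) (c : ℕ → ℂ) (Iop : ℤ → ℕ → M → M) (n : ℤ) (u : M) : M :=
  (∑ j ∈ J, (1 / (2 * c j)) • (∑ᶠ k : ℤ,
      if k < n - k - 1 then Iop k j (Iop (n - k - 1) (p - j) u)
      else Iop (n - k - 1) (p - j) (Iop k j u))) +
  (if n = 0 then (∑ j ∈ J, (j : ℂ) * ((p : ℂ) - (j : ℂ)) / (4 * (p : ℂ) ^ 2)) • u else 0)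

/-! ### Module-theoretic notions for the gap-`p` Virasoro algebra -/

namespace GapVirasoro

variable {p : ℕ} {g : Type u} [LieRing g] [LieAlgebra ℂ g] (S : GapVirasoro p g)
variable {M : Type v} [AddCommGroup M] [Module ℂ M] [LieRingModule g M] [LieModule ℂ g M]

/-- `v` is a highest weight vector of weight `φ`. -/
def IsHWVector (φ : GapWeight p) (v : M) : Prop :=
  (∀ n : ℤ, 0 < n → ⁅S.L n, v⁆ = 0) ∧
  (∀ n : ℤ, 0 ≤ n → ∀ i : ℕ, 1 ≤ i → i ≤ p - 1 → ⁅S.I n i, v⁆ = 0) ∧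
  ⁅S.L 0, v⁆ = φ.L0 • v ∧
  (∀ j : ℕ, j ≤ p - 1 → ⁅S.C j, v⁆ = φ.C j • v)

/-- `v` is a lowest weight vector of weight `φ`. -/
def IsLWVector (φ : GapWeight p) (v : M) : Prop :=
  (∀ n : ℤ, n < 0 → ⁅S.L n, v⁆ = 0) ∧
  (∀ n : ℤ, n < 0 → ∀ i : ℕ, 1 ≤ i → i ≤ p - 1 → ⁅S.I n i, v⁆ = 0) ∧
  ⁅S.L 0, v⁆ = φ.L0 • v ∧
  (∀ j : ℕ, j ≤ p - 1 → ⁅S.C j, v⁆ = φ.C j • v)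

/-- `(M, v)` is the Verma module of highest weight `φ` over the gap-`p` Virasoro algebra,
characterized by the universal property of `U(𝔤) ⊗_{U(𝔥 ⊕ 𝔤₊)} ℂv_φ`. -/
def IsVerma (φ : GapWeight p) (v : M) : Prop :=
  S.IsHWVector φ v ∧
  ∀ (N : Type v) [AddCommGroup N] [Module ℂ N] [LieRingModule g N] [LieModule ℂ g N] (w : N),
    S.IsHWVector φ w → ∃! f : M →ₗ⁅ℂ,g⁆ N, f v = w

/-- `M` is the irreducible highest weight module of highest weight `φ`. -/
def IsIrredHW (φ : GapWeight p) : Prop :=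
  (∃ v : M, v ≠ 0 ∧ S.IsHWVector φ v) ∧ LieIrreducible g M

/-- The restriction of the `g`-module `M` to `𝔥_J` is the Verma module `M_{𝔥_J, c}`
with highest weight vector `v` (stated via the universal property). -/
def IsHeisVerma (J : Finset ℕ) (c : ℕ → ℂ) (v : M) : Prop :=
  (∀ n : ℤ, 0 ≤ n → ∀ i ∈ J, ⁅S.I n i, v⁆ = 0) ∧
  (∀ i ∈ J, ⁅S.C i, v⁆ = c i • v) ∧
  ∀ (N : Type v) [AddCommGroup N] [Module ℂ N] (ρ : HeisRep p J N) (w : N),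
    ρ.IsHWVector c w →
    ∃! f : M →ₗ[ℂ] N, f v = w ∧
      (∀ (m : ℤ) (i : ℕ), i ∈ J → ∀ u : M, f ⁅S.I m i, u⁆ = ρ.I m i (f u)) ∧
      (∀ i ∈ J, ∀ u : M, f ⁅S.C i, u⁆ = ρ.C i (f u))

/-- The `g`-module `M` is `(M_{𝔥_J,φ})^𝔤`: its restriction to `𝔥_J` is the Verma module
`M_{𝔥_J,φ}`, the operators `I n i` for `i ∉ J` act trivially, `C i` acts by `φ(C i)` for
`i ∈ J` and by `0` for `i ∈ J^C`, `C 0` acts by `|J|`, and `L n` acts by the normally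
ordered sum of Proposition `gmodext`. -/
def IsHeisVermaExt (φ : GapWeight p) (v : M) : Prop :=
  S.IsHeisVerma φ.J φ.C v ∧
  (∀ (n : ℤ) (i : ℕ), 1 ≤ i → i ≤ p - 1 → i ∉ φ.J → ∀ u : M, ⁅S.I n i, u⁆ = 0) ∧
  (∀ i ∈ φ.J, ∀ u : M, ⁅S.C i, u⁆ = φ.C i • u) ∧
  (∀ i : ℕ, 1 ≤ i → i ≤ p - 1 → i ∉ φ.J → ∀ u : M, ⁅S.C i, u⁆ = 0) ∧
  (∀ u : M, ⁅S.C 0, u⁆ = (φ.J.card : ℂ) • u) ∧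
  (∀ (n : ℤ) (u : M), ⁅S.L n, u⁆ =
    gapLnFormula p φ.J φ.C (fun m i u => ⁅S.I m i, u⁆) n u)

/-- The restriction of the `g`-module `M` to `𝔤_{J^C}` is the Verma module of highest
weight `ψ` (with `ψ(L 0) = h`, `ψ(C 0) = c`, `ψ(C i) = 0`), with highest weight vector `v`. -/
def IsGJCVerma (JC : Finset ℕ) (h c : ℂ) (v : M) : Prop :=
  (∀ n : ℤ, 0 < n → ⁅S.L n, v⁆ = 0) ∧
  (∀ n : ℤ, 0 ≤ n → ∀ i ∈ JC, ⁅S.I n i, v⁆ = 0) ∧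
  ⁅S.L 0, v⁆ = h • v ∧ ⁅S.C 0, v⁆ = c • v ∧ (∀ i ∈ JC, ⁅S.C i, v⁆ = 0) ∧
  ∀ (N : Type v) [AddCommGroup N] [Module ℂ N] (ρ : GJCRep p JC N) (w : N),
    ρ.IsHWVector h c w →
    ∃! f : M →ₗ[ℂ] N, f v = w ∧
      (∀ (m : ℤ) (u : M), f ⁅S.L m, u⁆ = ρ.L m (f u)) ∧
      (∀ (m : ℤ) (i : ℕ), i ∈ JC → ∀ u : M, f ⁅S.I m i, u⁆ = ρ.I m i (f u)) ∧
      (∀ u : M, f ⁅S.C 0, u⁆ = ρ.C0 (f u)) ∧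
      (∀ i ∈ JC, ∀ u : M, f ⁅S.C i, u⁆ = ρ.C i (f u))

/-- The `g`-module `M` is `(M_{𝔤_{J^C},ψ})^e`: its restriction to `𝔤_{J^C}` is the Verma
module `M_{𝔤_{J^C},ψ}` and the ideal `𝔥_J` acts trivially. -/
def IsGJCVermaExt (φ : GapWeight p) (v : M) : Prop :=
  S.IsGJCVerma φ.JC φ.psiL0 φ.psiC0 v ∧
  (∀ (n : ℤ), ∀ i ∈ φ.J, ∀ u : M, ⁅S.I n i, u⁆ = 0) ∧
  (∀ i ∈ φ.J, ∀ u : M, ⁅S.C i, u⁆ = 0)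

/-- A subspace of `M` invariant under the Virasoro subalgebra `𝒱 = span{L n, C 0}`. -/
def VirInvariant (W : Submodule ℂ M) : Prop :=
  (∀ n : ℤ, ∀ u ∈ W, ⁅S.L n, u⁆ ∈ W) ∧ (∀ u ∈ W, ⁅S.C 0, u⁆ ∈ W)

/-- `v` is a highest weight vector for the Virasoro subalgebra, of weight `(h, c)`. -/
def IsVirHWVector (h c : ℂ) (v : M) : Prop :=
  (∀ n : ℤ, 0 < n → ⁅S.L n, v⁆ = 0) ∧ ⁅S.L 0, v⁆ = h • v ∧ ⁅S.C 0, v⁆ = c • v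

/-- The `g`-module `M` is `(V_{𝒱,ψ})^e`: its restriction to the Virasoro subalgebra `𝒱` is
the irreducible highest weight `𝒱`-module of highest weight `ψ = (h, c)`, and all `I n i`
and `C i` (`1 ≤ i ≤ p-1`) act trivially. -/
def IsVirEHW (h c : ℂ) (M : Type v) [AddCommGroup M] [Module ℂ M] [LieRingModule g M]
    [LieModule ℂ g M] : Prop :=
  (∃ v : M, v ≠ 0 ∧ S.IsVirHWVector h c v) ∧
  ((∃ u : M, u ≠ 0) ∧ ∀ W : Submodule ℂ M, S.VirInvariant W → W = ⊥ ∨ W = ⊤) ∧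
  (∀ (n : ℤ) (i : ℕ), 1 ≤ i → i ≤ p - 1 → ∀ u : M, ⁅S.I n i, u⁆ = 0) ∧
  (∀ i : ℕ, 1 ≤ i → i ≤ p - 1 → ∀ u : M, ⁅S.C i, u⁆ = 0)

/-- The weight space of `M` for the weight with `L 0`-eigenvalue `lm` and
`C j`-eigenvalues `cv j`. -/
noncomputable def weightSpace (lm : ℂ) (cv : ℕ → ℂ) : Submodule ℂ M :=
  Module.End.eigenspace (LieModule.toEnd ℂ g M (S.L 0)) lm ⊓
    ⨅ j ∈ Finset.Iic (p - 1), Module.End.eigenspace (LieModule.toEnd ℂ g M (S.C j)) (cv j)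

/-- `M` is a weight module: it is spanned by simultaneous eigenvectors of `𝔥`. -/
def IsWeightModule (M : Type v) [AddCommGroup M] [Module ℂ M] [LieRingModule g M]
    [LieModule ℂ g M] : Prop :=
  Submodule.span ℂ {u : M | ∃ (lm : ℂ) (cv : ℕ → ℂ),
    ⁅S.L 0, u⁆ = lm • u ∧ ∀ j : ℕ, j ≤ p - 1 → ⁅S.C j, u⁆ = cv j • u} = ⊤

/-- `M` is a Harish-Chandra module: a weight module all of whose weight spaces are
finite dimensional. -/
def IsHarishChandra (M : Type v) [AddCommGroup M] [Module ℂ M] [LieRingModule g M]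
    [LieModule ℂ g M] : Prop :=
  S.IsWeightModule M ∧
  ∀ (lm : ℂ) (cv : ℕ → ℂ), FiniteDimensional ℂ (S.weightSpace (M := M) lm cv)

/-- The conjugate-linear anti-involution `θ⁺_{1,β}`. -/
def IsThetaPlus (β : ℕ → ℂ) (θ : g → g) : Prop :=
  IsConjLinearAntiInvolution g θ ∧
  (∀ n : ℤ, θ (S.L n) = S.L (-n)) ∧
  (∀ (n : ℤ) (i : ℕ), 1 ≤ i → i ≤ p - 1 → θ (S.I n i) = β (p - i) • S.I (-n - 1) (p - i)) ∧
  θ (S.C 0) = S.C 0 ∧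
  (∀ i : ℕ, 1 ≤ i → i ≤ p - 1 → θ (S.C i) = (β i * β (p - i)) • S.C i)

/-- The center `𝔠 = span{C j}`. -/
def centerSub : Submodule ℂ g :=
  Submodule.span ℂ {x : g | ∃ j : ℕ, j ≤ p - 1 ∧ x = S.C j}

/-- The Cartan subalgebra `𝔥 = span{L 0, C j}`. -/
def cartanSub : Submodule ℂ g :=
  Submodule.span ℂ ({S.L 0} ∪ {x : g | ∃ j : ℕ, j ≤ p - 1 ∧ x = S.C j})

/-- The Virasoro subalgebra `𝒱 = span{L n, C 0}`. -/
def virSub : Submodule ℂ g :=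
  Submodule.span ℂ ({x : g | ∃ n : ℤ, x = S.L n} ∪ {S.C 0})

/-- The Heisenberg ideal `ℋ = span{I n i, C i : 1 ≤ i ≤ p-1}`. -/
def heisSub : Submodule ℂ g :=
  Submodule.span ℂ {x : g | (∃ (n : ℤ) (i : ℕ), 1 ≤ i ∧ i ≤ p - 1 ∧ x = S.I n i) ∨
    (∃ i : ℕ, 1 ≤ i ∧ i ≤ p - 1 ∧ x = S.C i)}

/-- The subalgebra `𝔤_{J^C} = span{L n, I n i, C 0, C i : i ∈ J^C}`. -/
def gjcSub (JC : Finset ℕ) : Submodule ℂ g :=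
  Submodule.span ℂ {x : g | (∃ n : ℤ, x = S.L n) ∨ (∃ (n : ℤ), ∃ i ∈ JC, x = S.I n i) ∨
    x = S.C 0 ∨ (∃ i ∈ JC, x = S.C i)}

/-- The Heisenberg ideal `𝔥_J = span{I n i, C i : i ∈ J}`. -/
def hJSub (J : Finset ℕ) : Submodule ℂ g :=
  Submodule.span ℂ {x : g | (∃ (n : ℤ), ∃ i ∈ J, x = S.I n i) ∨ (∃ i ∈ J, x = S.C i)}

end GapVirasoro

/-! ### Modules of intermediate series -/

open scoped Classical in
/-- `col(F) = {0 ≤ j ≤ p-1 : F i j ≠ 0 for some i}`. -/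
noncomputable def colF (p : ℕ) (F : ℕ → ℕ → ℂ) : Finset ℕ :=
  (Finset.range p).filter fun j => ∃ i : ℕ, 1 ≤ i ∧ i ≤ p - 1 ∧ F i j ≠ 0

open scoped Classical in
/-- `row(F) = {1 ≤ i ≤ p-1 : F i j ≠ 0 for some j}`. -/
noncomputable def rowF (p : ℕ) (F : ℕ → ℕ → ℂ) : Finset ℕ :=
  (Finset.Icc 1 (p - 1)).filter fun i => ∃ j : ℕ, j ≤ p - 1 ∧ F i j ≠ 0

/-- The compatibility conditions on the matrix `F` defining `V(a, b, F)`. -/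
def FCompat (p : ℕ) (F : ℕ → ℕ → ℂ) : Prop :=
  (∀ r s i : ℕ, 1 ≤ r → r ≤ p - 1 → 1 ≤ s → s ≤ p - 1 → i ≤ p - 1 →
    F s i * F r ((i + s) % p) = F r i * F s ((i + r) % p)) ∧
  (∀ i j : ℕ, j ∈ colF p F → i ∈ rowF p F → (i + j) % p ∈ colF p F)

/-- A realization of the module of intermediate series `V(a, b, F)` on the `g`-module `M`:
a basis `v_{k + j/p}` (`k ∈ ℤ`, `j ∈ col(F)`) with the prescribed action. -/
structure IntermediateSeries (p : ℕ) (a b : ℂ) (F : ℕ → ℕ → ℂ)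
    {g : Type u} [LieRing g] [LieAlgebra ℂ g] (S : GapVirasoro p g)
    (M : Type v) [AddCommGroup M] [Module ℂ M] [LieRingModule g M] [LieModule ℂ g M] where
  vec : ℤ → ℕ → M
  basis : Module.Basis (ℤ × {j : ℕ // j ∈ colF p F}) ℂ M
  basis_eq : ∀ (k : ℤ) (j : {j : ℕ // j ∈ colF p F}), basis (k, j) = vec k j.1
  act_L : ∀ (m k : ℤ) (j : ℕ), j ∈ colF p F →
    ⁅S.L m, vec k j⁆ = (-(a + (k : ℂ) + (j : ℂ) / (p : ℂ) + b * (m : ℂ))) • vec (m + k) j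
  act_I : ∀ (m k : ℤ) (i j : ℕ), 1 ≤ i → i ≤ p - 1 → j ∈ colF p F →
    ⁅S.I m i, vec k j⁆ = F i j • vec (m + k + (((i + j) / p : ℕ) : ℤ)) ((i + j) % p)
  act_C : ∀ s : ℕ, s ≤ p - 1 → ∀ u : M, ⁅S.C s, u⁆ = 0

namespace GapVirasoro

variable {p : ℕ} {g : Type u} [LieRing g] [LieAlgebra ℂ g] (S : GapVirasoro p g)
variable {M : Type v} [AddCommGroup M] [Module ℂ M] [LieRingModule g M] [LieModule ℂ g M]

/-- A subspace of `M` invariant under the subalgebra `𝔤_{J^C}`. -/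
def GJCInvariant (JC : Finset ℕ) (W : Submodule ℂ M) : Prop :=
  (∀ n : ℤ, ∀ u ∈ W, ⁅S.L n, u⁆ ∈ W) ∧
  (∀ n : ℤ, ∀ i ∈ JC, ∀ u ∈ W, ⁅S.I n i, u⁆ ∈ W) ∧
  (∀ u ∈ W, ⁅S.C 0, u⁆ ∈ W) ∧
  (∀ i ∈ JC, ∀ u ∈ W, ⁅S.C i, u⁆ ∈ W)

end GapVirasoro

/-- The quantity `Φ(α, β)` of Theorem `irrgmod` (3). -/
noncomputable def gapPhi (p : ℕ) (φ : GapWeight p) (α β : ℕ) : ℂ :=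
  4 * φ.L0 - (∑ j ∈ Finset.Icc 1 (p - 1), (j : ℂ) * ((p : ℂ) - (j : ℂ)) / (p : ℂ) ^ 2) +
    ((α : ℂ) ^ 2 - 1) * (φ.C 0 - (p : ℂ) - 12) / 6 + 2 * ((α : ℂ) * (β : ℂ) - 1)

/-- Conditions (1) and (2) of the unitarity criterion for irreducible highest weight
modules (Theorem `unitaryhimod`). -/
def gapUnitaryHWCond (p : ℕ) (φ : GapWeight p) (β : ℕ → ℂ) : Prop :=
  (∀ i ∈ φ.J, (β i * φ.C i).im = 0 ∧ β i * φ.C i ≠ 0) ∧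
  (((∃ cr : ℝ, φ.C 0 = (cr : ℂ) ∧ (φ.J.card : ℝ) + 1 ≤ cr) ∧
    (∃ hr : ℝ, φ.L0 = (hr : ℂ) ∧
      (∑ j ∈ φ.J, (j : ℝ) * ((p : ℝ) - (j : ℝ)) / (4 * (p : ℝ) ^ 2)) ≤ hr)) ∨
   (∃ m : ℕ, 2 ≤ m ∧ ∃ r s : ℕ, r < s ∧ s < m ∧
     φ.C 0 = (φ.J.card : ℂ) + 1 - 6 / ((m : ℂ) * ((m : ℂ) + 1)) ∧
     φ.L0 = (∑ j ∈ φ.J, (j : ℂ) * ((p : ℂ) - (j : ℂ)) / (4 * (p : ℂ) ^ 2)) +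
       (((m : ℂ) * (r : ℂ) + (s : ℂ)) ^ 2 - 1) / (4 * (m : ℂ) * ((m : ℂ) + 1))))


/-!
The tensor product `M₁ ⊗ M₂` has the universal property of the Verma module. Let `w` be a
highest weight vector of weight `φ` in a `𝔤`-module `N`. The universal property of `M_{𝔥_J,φ}`
gives an `𝔥_J`-equivariant `T : M₁ → N` with `T v₁ = w`, i.e. an `𝔥_J`-invariant of the
`𝔤`-module `Hom(M₁, N)`. As `𝔥_J` is an ideal, these invariants form a `𝔤`-submodule `H` on
which `𝔥_J` acts trivially, and an element of `H` is determined by its value at `v₁`. Hence `T`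
is a highest weight vector for `𝔤_{J^C}` in `H`, of weight `ψ = φ - (weight of v₁)`.
The universal property of `M_{𝔤_{J^C},ψ}` gives a `𝔤`-map `M₂ → H ⊆ Hom(M₁, N)`, that is a
`𝔤`-map `M₁ ⊗ M₂ → N` sending `v₁ ⊗ v₂` to `w`; uniqueness follows in the same two steps.
-/

namespace GapWeight

variable {p : ℕ} (φ : GapWeight p) {i : ℕ}

theorem mem_J : i ∈ φ.J ↔ (1 ≤ i ∧ i ≤ p - 1) ∧ φ.C i ≠ 0 := by
  classical
  simp [J]

theorem mem_JC : i ∈ φ.JC ↔ (1 ≤ i ∧ i ≤ p - 1) ∧ φ.C i = 0 := by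
  classical
  simp [JC]

variable {φ}

theorem sub_mem_J (h : i ∈ φ.J) : p - i ∈ φ.J := by
  obtain ⟨⟨h1, h2⟩, hC⟩ := φ.mem_J.1 h
  exact φ.mem_J.2 ⟨⟨by omega, by omega⟩, by rwa [φ.symm i h1 h2]⟩

theorem min_mem_J (h : i ∈ φ.J) : min i (p - i) ∈ φ.J := by
  rcases min_choice i (p - i) with h' | h' <;> rw [h']
  exacts [h, sub_mem_J h]

theorem notMem_J_of_mem_JC (h : i ∈ φ.JC) : i ∉ φ.J :=
  fun h' => (φ.mem_J.1 h').2 (φ.mem_JC.1 h).2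

theorem mem_J_or_mem_JC (h1 : 1 ≤ i) (h2 : i ≤ p - 1) : i ∈ φ.J ∨ i ∈ φ.JC := by
  by_cases h : φ.C i = 0
  exacts [.inr (φ.mem_JC.2 ⟨⟨h1, h2⟩, h⟩), .inl (φ.mem_J.2 ⟨⟨h1, h2⟩, h⟩)]

end GapWeight

namespace TensorProduct.LieModule

variable {R L M N P : Type*} [CommRing R] [LieRing L] [LieAlgebra R L]
  [AddCommGroup M] [Module R M] [LieRingModule L M] [LieModule R L M]
  [AddCommGroup N] [Module R N] [LieRingModule L N] [LieModule R L N]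
  [AddCommGroup P] [Module R P] [LieRingModule L P] [LieModule R L P]

def liftRight (f : N →ₗ⁅R,L⁆ M →ₗ[R] P) : M ⊗[R] N →ₗ⁅R,L⁆ P :=
  liftLie R L M N P
    { (f : N →ₗ[R] M →ₗ[R] P).flip with
      map_lie' := fun {x m} => by
        ext n
        change f n ⁅x, m⁆ = ⁅x, f n m⁆ - f ⁅x, n⁆ m
        rw [LieModuleHom.map_lie₂, add_sub_cancel_left] }

@[simp]
theorem liftRight_tmul (f : N →ₗ⁅R,L⁆ M →ₗ[R] P) (m : M) (n : N) :
    liftRight f (m ⊗ₜ n) = f n m := by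
  simp [liftRight, liftLie_apply]

def curryRight (F : M ⊗[R] N →ₗ⁅R,L⁆ P) : N →ₗ⁅R,L⁆ M →ₗ[R] P :=
  { (TensorProduct.mk R M N).flip.compr₂ (F : M ⊗[R] N →ₗ[R] P) with
    map_lie' := fun {x n} => by
      ext m
      simp [← LieModuleHom.map_lie, lie_tmul_right] }

end TensorProduct.LieModule

namespace GapVirasoro

variable {p : ℕ} {g : Type u} [LieRing g] [LieAlgebra ℂ g] (S : GapVirasoro p g)
  {φ : GapWeight p}

theorem induction_on {P : g → Prop} (x : g) (zero : P 0)
    (add : ∀ x y, P x → P y → P (x + y)) (smul : ∀ (a : ℂ) x, P x → P (a • x))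
    (hL : ∀ n, P (S.L n)) (hI : ∀ n i, 1 ≤ i → i ≤ p - 1 → P (S.I n i))
    (hC : ∀ j ≤ p - 1, P (S.C j)) : P x := by
  have hx : x ∈ Submodule.span ℂ (Set.range S.basis) := S.basis.span_eq ▸ Submodule.mem_top
  induction hx using Submodule.span_induction with
  | mem _ h =>
    obtain ⟨k, rfl⟩ := h
    cases k with
    | L n => rw [S.basis_L]; exact hL n
    | I n i => rw [S.basis_I]; exact hI n i i.2.1 i.2.2
    | C j => rw [S.basis_C]; exact hC j (by omega)
  | zero => exact zero
  | add x y _ _ hx hy => exact add x y hx hy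
  | smul a x _ hx => exact smul a x hx

variable {M N : Type v} [AddCommGroup M] [Module ℂ M] [LieRingModule g M]
  [AddCommGroup N] [Module ℂ N] [LieRingModule g N] [LieModule ℂ g N]

section Restriction

variable (φ N)

attribute [local instance] LieRing.ofAssociativeRing

noncomputable def toHeisRep : HeisRep p φ.J N where
  I m i := LieModule.toEnd ℂ g N (S.I m i)
  C i := LieModule.toEnd ℂ g N (S.C i)
  C_symm i hi := by
    obtain ⟨⟨h1, h2⟩, -⟩ := φ.mem_J.1 hi
    rw [S.C_symm i h1 h2]
  comm_II m n i j hi hj := by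
    obtain ⟨⟨hi1, hi2⟩, -⟩ := φ.mem_J.1 hi
    obtain ⟨⟨hj1, hj2⟩, -⟩ := φ.mem_J.1 hj
    rw [← LieHom.map_lie, S.bracket_II m n i j hi1 hi2 hj1 hj2]
    split_ifs <;> simp
  central_CI m i j _ hj := by
    rw [← LieHom.map_lie, S.central_C j (φ.mem_J.1 hj).1.2, map_zero]
  central_CC i j _ hj := by
    rw [← LieHom.map_lie, S.central_C j (φ.mem_J.1 hj).1.2, map_zero]

noncomputable def toGJCRep : GJCRep p φ.JC N where
  L m := LieModule.toEnd ℂ g N (S.L m)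
  I m i := LieModule.toEnd ℂ g N (S.I m i)
  C0 := LieModule.toEnd ℂ g N (S.C 0)
  C i := LieModule.toEnd ℂ g N (S.C i)
  C_symm i hi := by
    obtain ⟨⟨h1, h2⟩, -⟩ := φ.mem_JC.1 hi
    rw [S.C_symm i h1 h2]
  comm_LL m n := by
    rw [← LieHom.map_lie, S.bracket_LL m n]
    split_ifs <;> simp
  comm_LI m n i hi := by
    obtain ⟨⟨h1, h2⟩, -⟩ := φ.mem_JC.1 hi
    rw [← LieHom.map_lie, S.bracket_LI m n i h1 h2, map_smul]
  comm_II m n i j hi hj := by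
    obtain ⟨⟨hi1, hi2⟩, -⟩ := φ.mem_JC.1 hi
    obtain ⟨⟨hj1, hj2⟩, -⟩ := φ.mem_JC.1 hj
    rw [← LieHom.map_lie, S.bracket_II m n i j hi1 hi2 hj1 hj2]
    split_ifs <;> simp
  central_C0 m := by
    simp only [← LieHom.map_lie, S.central_C 0 (Nat.zero_le _), map_zero, implies_true, and_self]
  central_C j hj := by
    simp only [← LieHom.map_lie, S.central_C j (φ.mem_JC.1 hj).1.2, map_zero, implies_true,
      and_self]

end Restriction

theorem lie_lie_I_eq_zero {x : N} (hI : ∀ m, ∀ i ∈ φ.J, ⁅S.I m i, x⁆ = 0)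
    (hC : ∀ i ∈ φ.J, ⁅S.C i, x⁆ = 0) {m : ℤ} {i : ℕ} (hi : i ∈ φ.J) (z : g) :
    ⁅⁅S.I m i, z⁆, x⁆ = 0 := by
  obtain ⟨⟨hi1, hi2⟩, -⟩ := φ.mem_J.1 hi
  induction z using S.induction_on with
  | zero => simp
  | add y z hy hz => simp [lie_add, add_lie, hy, hz]
  | smul a z hz => simp [lie_smul, smul_lie, hz]
  | hL n => rw [← lie_skew, S.bracket_LI n m i hi1 hi2, neg_lie, smul_lie, hI _ i hi]; simp
  | hI n j hj1 hj2 =>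
    rw [S.bracket_II m n i j hi1 hi2 hj1 hj2]
    split_ifs
    · rw [smul_lie, hC _ (GapWeight.min_mem_J hi), smul_zero]
    · exact zero_lie x
  | hC j hj => rw [← lie_skew, S.central_C j hj, neg_zero, zero_lie]

variable (φ N) in
def heisInvariants : LieSubmodule ℂ g N where
  carrier := {x | (∀ m, ∀ i ∈ φ.J, ⁅S.I m i, x⁆ = 0) ∧ ∀ i ∈ φ.J, ⁅S.C i, x⁆ = 0}
  add_mem' hx hy := ⟨fun m i hi => by simp [hx.1 m i hi, hy.1 m i hi],
    fun i hi => by simp [hx.2 i hi, hy.2 i hi]⟩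
  zero_mem' := ⟨fun _ _ _ => lie_zero _, fun _ _ => lie_zero _⟩
  smul_mem' a _ hx := ⟨fun m i hi => by simp [hx.1 m i hi], fun i hi => by simp [hx.2 i hi]⟩
  lie_mem {z x} hx := by
    refine ⟨fun m i hi => ?_, fun i hi => ?_⟩
    · rw [leibniz_lie, S.lie_lie_I_eq_zero hx.1 hx.2 hi, hx.1 m i hi, lie_zero, zero_add]
    · rw [leibniz_lie, S.central_C i (φ.mem_J.1 hi).1.2, hx.2 i hi, lie_zero, zero_lie, zero_add]

theorem mem_heisInvariants {x : N} : x ∈ S.heisInvariants φ N ↔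
    (∀ m, ∀ i ∈ φ.J, ⁅S.I m i, x⁆ = 0) ∧ ∀ i ∈ φ.J, ⁅S.C i, x⁆ = 0 :=
  Iff.rfl

theorem mem_heisInvariants_self (x : S.heisInvariants φ N) :
    x ∈ S.heisInvariants φ (S.heisInvariants φ N) :=
  ⟨fun m i hi => Subtype.ext (x.2.1 m i hi), fun i hi => Subtype.ext (x.2.2 i hi)⟩

variable {S}

namespace IsHeisVermaExt

variable {v : M} (hv : S.IsHeisVermaExt φ v)
include hv

theorem lie_I_eq_zero {n : ℤ} (hn : 0 ≤ n) {i : ℕ} (h1 : 1 ≤ i) (h2 : i ≤ p - 1) :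
    ⁅S.I n i, v⁆ = 0 := by
  by_cases hi : i ∈ φ.J
  · exact hv.1.1 n hn i hi
  · exact hv.2.1 n i h1 h2 hi v

theorem lie_C (u : M) {j : ℕ} (h1 : 1 ≤ j) (h2 : j ≤ p - 1) : ⁅S.C j, u⁆ = φ.C j • u := by
  rcases φ.mem_J_or_mem_JC h1 h2 with hj | hj
  · exact hv.2.2.1 j hj u
  · rw [hv.2.2.2.1 j h1 h2 (GapWeight.notMem_J_of_mem_JC hj) u, (φ.mem_JC.1 hj).2, zero_smul]

/-- The right factor of each normally ordered product `:I_k^j I_{n-k-1}^{p-j}:` carries the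
larger of two indices with sum `n - 1 ≥ -1`, so it kills `v`. -/
theorem lie_L {n : ℤ} (hn : 0 ≤ n) :
    ⁅S.L n, v⁆ =
      (if n = 0 then ∑ j ∈ φ.J, (j : ℂ) * ((p : ℂ) - (j : ℂ)) / (4 * (p : ℂ) ^ 2) else 0) • v := by
  have hterm : ∀ j ∈ φ.J, ∀ k : ℤ,
      (if k < n - k - 1 then ⁅S.I k j, ⁅S.I (n - k - 1) (p - j), v⁆⁆
        else ⁅S.I (n - k - 1) (p - j), ⁅S.I k j, v⁆⁆) = 0 := by
    intro j hj k
    obtain ⟨⟨h1, h2⟩, -⟩ := φ.mem_J.1 hj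
    split_ifs
    · rw [hv.lie_I_eq_zero (by omega) (by omega) (by omega), lie_zero]
    · rw [hv.lie_I_eq_zero (by omega) h1 h2, lie_zero]
  rw [hv.2.2.2.2.2 n v, gapLnFormula,
    Finset.sum_congr rfl fun j hj => by rw [finsum_congr (hterm j hj), finsum_zero, smul_zero],
    Finset.sum_const_zero, zero_add]
  split_ifs <;> simp

end IsHeisVermaExt

theorem IsGJCVerma.lieModuleHom_eq_zero {v : M} {h c : ℂ} (hv : S.IsGJCVerma φ.JC h c v)
    (f : M →ₗ⁅ℂ,g⁆ N) (hf : f v = 0) : f = 0 := by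
  obtain ⟨F, -, huniq⟩ := hv.2.2.2.2.2 N (S.toGJCRep φ N) 0
    ⟨fun _ _ => map_zero _, fun _ _ _ _ => map_zero _, by simp, by simp, fun _ _ => map_zero _⟩
  have hf' := (huniq f ⟨hf, fun _ _ => f.map_lie _ _, fun _ _ _ _ => f.map_lie _ _,
    fun _ => f.map_lie _ _, fun _ _ _ => f.map_lie _ _⟩).trans
    (huniq 0 ⟨rfl, by simp, by simp, by simp, by simp⟩).symm
  exact LieModuleHom.ext fun u => LinearMap.congr_fun hf' u

variable [LieModule ℂ g M]

variable (S) in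
theorem map_lie_of_generators (f : M →ₗ[ℂ] N) (hL : ∀ n u, f ⁅S.L n, u⁆ = ⁅S.L n, f u⁆)
    (hI : ∀ n i, 1 ≤ i → i ≤ p - 1 → ∀ u, f ⁅S.I n i, u⁆ = ⁅S.I n i, f u⁆)
    (hC : ∀ j ≤ p - 1, ∀ u, f ⁅S.C j, u⁆ = ⁅S.C j, f u⁆) (x : g) (u : M) :
    f ⁅x, u⁆ = ⁅x, f u⁆ := by
  induction x using S.induction_on generalizing u with
  | zero => simp
  | add x y hx hy => simp [add_lie, hx, hy]
  | smul a x hx => simp [smul_lie, hx]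
  | hL n => exact hL n u
  | hI n i h1 h2 => exact hI n i h1 h2 u
  | hC j hj => exact hC j hj u

variable (S) in
theorem mem_heisInvariants_linearMap {T : M →ₗ[ℂ] N} : T ∈ S.heisInvariants φ (M →ₗ[ℂ] N) ↔
    (∀ m, ∀ i ∈ φ.J, ∀ u, T ⁅S.I m i, u⁆ = ⁅S.I m i, T u⁆) ∧
      ∀ i ∈ φ.J, ∀ u, T ⁅S.C i, u⁆ = ⁅S.C i, T u⁆ := by
  simp only [mem_heisInvariants, LinearMap.ext_iff, LieHom.lie_apply, LinearMap.zero_apply,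
    sub_eq_zero, @eq_comm N ⁅_, T _⁆]

namespace IsHeisVerma

variable {v : M} (hv : S.IsHeisVerma φ.J φ.C v)
include hv

theorem exists_mem_heisInvariants {w : N} (hw : (S.toHeisRep φ N).IsHWVector φ.C w) :
    ∃ T ∈ S.heisInvariants φ (M →ₗ[ℂ] N), T v = w := by
  obtain ⟨T, ⟨hTv, hI, hC⟩, -⟩ := hv.2.2 N (S.toHeisRep φ N) w hw
  exact ⟨T, S.mem_heisInvariants_linearMap.2 ⟨hI, hC⟩, hTv⟩

theorem eq_zero_of_mem_heisInvariants {T : M →ₗ[ℂ] N}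
    (hT : T ∈ S.heisInvariants φ (M →ₗ[ℂ] N)) (hTv : T v = 0) : T = 0 := by
  obtain ⟨f, -, huniq⟩ := hv.2.2 N (S.toHeisRep φ N) 0
    ⟨fun _ _ _ _ => map_zero _, fun _ _ => (map_zero _).trans (smul_zero _).symm⟩
  have hT' := S.mem_heisInvariants_linearMap.1 hT
  exact (huniq T ⟨hTv, hT'.1, hT'.2⟩).trans (huniq 0 ⟨rfl, by simp, by simp⟩).symm

theorem lie_eq_smul {T : M →ₗ[ℂ] N} (hT : T ∈ S.heisInvariants φ (M →ₗ[ℂ] N)) (x : g) (a : ℂ)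
    (h : ⁅x, T v⁆ - T ⁅x, v⁆ = a • T v) : ⁅x, T⁆ = a • T :=
  sub_eq_zero.1 <| hv.eq_zero_of_mem_heisInvariants
    (sub_mem (LieSubmodule.lie_mem _ hT) (Submodule.smul_mem _ a hT)) (by simp [h])

end IsHeisVerma

theorem IsGJCVermaExt.exists_lieModuleHom {v : M} (hv : S.IsGJCVermaExt φ v)
    (hN : ∀ x : N, x ∈ S.heisInvariants φ N) {w : N}
    (hw : (S.toGJCRep φ N).IsHWVector φ.psiL0 φ.psiC0 w) : ∃ f : M →ₗ⁅ℂ,g⁆ N, f v = w := by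
  obtain ⟨f, ⟨hfv, hL, hI, hC0, hC⟩, -⟩ := hv.1.2.2.2.2.2 N (S.toGJCRep φ N) w hw
  have hI' : ∀ n i, 1 ≤ i → i ≤ p - 1 → ∀ u, f ⁅S.I n i, u⁆ = ⁅S.I n i, f u⁆ := by
    intro n i h1 h2 u
    rcases φ.mem_J_or_mem_JC h1 h2 with hi | hi
    · rw [hv.2.1 n i hi u, map_zero, (hN _).1 n i hi]
    · exact hI n i hi u
  have hC' : ∀ j ≤ p - 1, ∀ u, f ⁅S.C j, u⁆ = ⁅S.C j, f u⁆ := by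
    intro j hj u
    rcases Nat.eq_zero_or_pos j with rfl | hj0
    · exact hC0 u
    rcases φ.mem_J_or_mem_JC hj0 hj with hi | hi
    · rw [hv.2.2 j hi u, map_zero, (hN _).2 j hi]
    · exact hC j hi u
  exact ⟨{ f with map_lie' := fun {x u} => S.map_lie_of_generators f hL hI' hC' x u }, hfv⟩

theorem IsVerma.nonempty_lieModuleEquiv {v : M} {w : N} (hv : S.IsVerma φ v)
    (hw : S.IsVerma φ w) : Nonempty (M ≃ₗ⁅ℂ,g⁆ N) := by
  obtain ⟨f, hf, -⟩ := hv.2 N w hw.1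
  obtain ⟨f', hf', -⟩ := hw.2 M v hv.1
  have hf'f : f'.comp f = LieModuleHom.id :=
    (hv.2 M v hv.1).unique (by simp [hf, hf']) rfl
  have hff' : f.comp f' = LieModuleHom.id :=
    (hw.2 N w hw.1).unique (by simp [hf, hf']) rfl
  exact ⟨{ f with
    invFun := f'
    left_inv := fun u => LieModuleHom.congr_fun hf'f u
    right_inv := fun u => LieModuleHom.congr_fun hff' u }⟩

theorem IsHeisVermaExt.isHWVector_toGJCRep {v : M} (hv : S.IsHeisVermaExt φ v) {w : N}
    (hw : S.IsHWVector φ w) {T : M →ₗ[ℂ] N}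
    (hT : T ∈ S.heisInvariants φ (M →ₗ[ℂ] N)) (hTv : T v = w) :
    (S.toGJCRep φ (S.heisInvariants φ (M →ₗ[ℂ] N))).IsHWVector φ.psiL0 φ.psiC0 ⟨T, hT⟩ := by
  have key (x : g) (a : ℂ) (h : ⁅x, w⁆ - T ⁅x, v⁆ = a • w) :
      ⁅x, (⟨T, hT⟩ : S.heisInvariants φ (M →ₗ[ℂ] N))⁆ = a • ⟨T, hT⟩ :=
    Subtype.ext (hv.1.lie_eq_smul hT x a (by rwa [hTv]))
  obtain ⟨hwL, hwI, hwL0, hwC⟩ := hw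
  refine ⟨fun n hn => ?_, fun n hn i hi => ?_, ?_, ?_, fun i hi => ?_⟩
  · exact (key _ 0 (by simp [hwL n hn, hv.lie_L hn.le, hn.ne'])).trans (zero_smul _ _)
  · obtain ⟨⟨h1, h2⟩, -⟩ := φ.mem_JC.1 hi
    exact (key _ 0 (by simp [hwI n hn i h1 h2, hv.lie_I_eq_zero hn h1 h2])).trans (zero_smul _ _)
  · exact key _ _ (by
      rw [hwL0, hv.lie_L le_rfl, if_pos rfl, map_smul, hTv, GapWeight.psiL0, sub_smul])
  · exact key _ _ (by
      rw [hwC 0 (Nat.zero_le _), hv.2.2.2.2.1 v, map_smul, hTv, GapWeight.psiC0, sub_smul])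
  · obtain ⟨⟨h1, h2⟩, hφ⟩ := φ.mem_JC.1 hi
    exact (key _ 0 (by simp [hwC i h2, hv.lie_C v h1 h2, hφ])).trans (zero_smul _ _)

section TensorProduct

open TensorProduct.LieModule

variable {M₁ M₂ : Type v} [AddCommGroup M₁] [Module ℂ M₁] [LieRingModule g M₁] [LieModule ℂ g M₁]
  [AddCommGroup M₂] [Module ℂ M₂] [LieRingModule g M₂] [LieModule ℂ g M₂]
  {v₁ : M₁} {v₂ : M₂} (h₁ : S.IsHeisVermaExt φ v₁) (h₂ : S.IsGJCVermaExt φ v₂)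
include h₁ h₂

theorem isHWVector_tmul : S.IsHWVector φ (v₁ ⊗ₜ[ℂ] v₂) := by
  refine ⟨fun n hn => ?_, fun n hn i h1 h2 => ?_, ?_, fun j hj => ?_⟩
  · simp [lie_tmul_right, h₁.lie_L hn.le, hn.ne', h₂.1.1 n hn]
  · rw [lie_tmul_right, h₁.lie_I_eq_zero hn h1 h2, TensorProduct.zero_tmul, zero_add]
    rcases φ.mem_J_or_mem_JC h1 h2 with hi | hi
    · rw [h₂.2.1 n i hi v₂, TensorProduct.tmul_zero]
    · rw [h₂.1.2.1 n hn i hi, TensorProduct.tmul_zero]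
  · rw [lie_tmul_right, h₁.lie_L le_rfl, if_pos rfl, h₂.1.2.2.1, TensorProduct.tmul_smul,
      ← TensorProduct.smul_tmul', ← add_smul, GapWeight.psiL0, add_sub_cancel]
  · rw [lie_tmul_right]
    rcases Nat.eq_zero_or_pos j with rfl | hj0
    · rw [h₁.2.2.2.2.1 v₁, h₂.1.2.2.2.1, TensorProduct.tmul_smul, ← TensorProduct.smul_tmul',
        ← add_smul, GapWeight.psiC0, add_sub_cancel]
    have hv₂ : ⁅S.C j, v₂⁆ = 0 := by
      rcases φ.mem_J_or_mem_JC hj0 hj with hi | hi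
      exacts [h₂.2.2 j hi v₂, h₂.1.2.2.2.2.1 j hi]
    rw [h₁.lie_C v₁ hj0 hj, hv₂, TensorProduct.tmul_zero, add_zero, TensorProduct.smul_tmul']

theorem exists_lieModuleHom_tmul {w : N} (hw : S.IsHWVector φ w) :
    ∃ F : M₁ ⊗[ℂ] M₂ →ₗ⁅ℂ,g⁆ N, F (v₁ ⊗ₜ v₂) = w := by
  obtain ⟨T, hT, hTv⟩ := h₁.1.exists_mem_heisInvariants (w := w)
    ⟨fun n hn i hi => hw.2.1 n hn i (φ.mem_J.1 hi).1.1 (φ.mem_J.1 hi).1.2,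
      fun i hi => hw.2.2.2 i (φ.mem_J.1 hi).1.2⟩
  obtain ⟨f, hf⟩ := h₂.exists_lieModuleHom S.mem_heisInvariants_self
    (h₁.isHWVector_toGJCRep hw hT hTv)
  exact ⟨liftRight ((S.heisInvariants φ _).incl.comp f), by simp [hf, hTv]⟩

theorem lieModuleHom_tmul_eq_zero (F : M₁ ⊗[ℂ] M₂ →ₗ⁅ℂ,g⁆ N) (hF : F (v₁ ⊗ₜ v₂) = 0) :
    F = 0 := by
  have hv₂ : curryRight F v₂ = 0 := by
    refine h₁.1.eq_zero_of_mem_heisInvariants ⟨fun m i hi => ?_, fun i hi => ?_⟩ hF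
    · rw [← LieModuleHom.map_lie, h₂.2.1 m i hi v₂, map_zero]
    · rw [← LieModuleHom.map_lie, h₂.2.2 i hi v₂, map_zero]
  have hD := h₂.1.lieModuleHom_eq_zero (curryRight F) hv₂
  ext t
  induction t using TensorProduct.induction_on with
  | zero => simp
  | tmul u₁ u₂ => exact LinearMap.congr_fun (LieModuleHom.congr_fun hD u₂) u₁
  | add t t' ht ht' => simp_all

theorem isVerma_tmul : S.IsVerma φ (v₁ ⊗ₜ[ℂ] v₂) := by
  refine ⟨isHWVector_tmul h₁ h₂, fun N _ _ _ _ w hw => ?_⟩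
  obtain ⟨F, hF⟩ := exists_lieModuleHom_tmul h₁ h₂ hw
  exact ⟨F, hF, fun G hG => sub_eq_zero.1 <|
    lieModuleHom_tmul_eq_zero h₁ h₂ _ (by simp [hF, hG])⟩

end TensorProduct

end GapVirasoro

theorem verma_iso_tensor_general {p : ℕ} {g : Type u} [LieRing g] [LieAlgebra ℂ g]
    (S : GapVirasoro p g) (φ : GapWeight p)
    {M0 : Type v} [AddCommGroup M0] [Module ℂ M0] [LieRingModule g M0] [LieModule ℂ g M0]
    (v0 : M0) (hM0 : S.IsVerma φ v0)
    {M1 : Type v} [AddCommGroup M1] [Module ℂ M1] [LieRingModule g M1] [LieModule ℂ g M1]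
    (v1 : M1) (hM1 : S.IsHeisVermaExt φ v1)
    {M2 : Type v} [AddCommGroup M2] [Module ℂ M2] [LieRingModule g M2] [LieModule ℂ g M2]
    (v2 : M2) (hM2 : S.IsGJCVermaExt φ v2) :
    Nonempty (M0 ≃ₗ⁅ℂ,g⁆ (M1 ⊗[ℂ] M2)) :=
  hM0.nonempty_lieModuleEquiv (GapVirasoro.isVerma_tmul hM1 hM2)

/-- For `φ ∈ 𝔥*` with `J ≠ ∅`, the Verma module `M_{𝔤,φ}` is isomorphic as a
`𝔤`-module to `(M_{𝔥_J,φ})^𝔤 ⊗ (M_{𝔤_{J^C},ψ})^e`. -/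
theorem verma_iso_tensor {p : ℕ} (hp : 1 < p) {g : Type u} [LieRing g] [LieAlgebra ℂ g]
    (S : GapVirasoro p g) (φ : GapWeight p) (hJ : φ.J.Nonempty)
    {M0 : Type v} [AddCommGroup M0] [Module ℂ M0] [LieRingModule g M0] [LieModule ℂ g M0]
    (v0 : M0) (hM0 : S.IsVerma φ v0)
    {M1 : Type v} [AddCommGroup M1] [Module ℂ M1] [LieRingModule g M1] [LieModule ℂ g M1]
    (v1 : M1) (hM1 : S.IsHeisVermaExt φ v1)
    {M2 : Type v} [AddCommGroup M2] [Module ℂ M2] [LieRingModule g M2] [LieModule ℂ g M2]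
    (v2 : M2) (hM2 : S.IsGJCVermaExt φ v2) :
    Nonempty (M0 ≃ₗ⁅ℂ,g⁆ (M1 ⊗[ℂ] M2)) :=
  verma_iso_tensor_general S φ v0 hM0 v1 hM1 v2 hM2
end

section
/- Let p > 1 be an integer, 𝔤 the gap-p Virasoro algebra, θ a conjugate-linear anti-involution of 𝔤, and λ ∈ {1,−1} the sign with θ(L_0) = λL_0 + C(L_0), C(L_0) central. Then there exist nonzero complex numbers A_{n,i} (n ∈ ℤ, 1 ≤ i ≤ p−1) such that θ(I_n^i) = A_{−n−1,p−i} I_{−n−1}^{p−i} if λ = 1 and θ(I_n^i) = A_{n,i} I_n^i if λ = −1, and θ(C_i) = λ A_{0,i} A_{−1,p−i} C_i for all 1 ≤ i ≤ p−1. In particular θ(ℋ) = ℋ, where ℋ = span{I_n^i, C_i : n ∈ ℤ, 1 ≤ i ≤ p−1}. -/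
open scoped TensorProduct

universe u v

/-! The eigenvalues of `ad L₀` on the distinguished basis are `-m` on `L m`, `-(m + i/p)` on
`I m i` and `0` on the centre, so each `I n i` spans the full eigenspace of its eigenvalue.
Applying `θ` to `⁅L₀, I m j⁆` shows that `θ (I m j)` is an `ad L₀`-eigenvector of eigenvalue
`λ (m + j/p)`: for `λ = 1` this is the eigenvalue of `I (-m-1) (p-j)`, for `λ = -1` that of
`I m j`. The value of `θ` on `C i` then follows from `⁅I 0 i, I (-1) (p-i)⁆ = (i/p) C i`. -/

lemma eq_zero_and_eq_zero_of_intCast_add_div_eq_zero {K : Type*} [Field K] [CharZero K]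
    {p : ℕ} {a d : ℤ} (hd : |d| < p) (h : (a : K) + d / p = 0) : a = 0 ∧ d = 0 := by
  have hp : (p : ℤ) ≠ 0 := ((abs_nonneg d).trans_lt hd).ne'
  have hsum : a * p + d = 0 := by
    have hpK : (p : K) ≠ 0 := by exact_mod_cast hp
    field_simp at h
    exact_mod_cast h
  have hd0 : d = 0 := Int.eq_zero_of_abs_lt_dvd ⟨-a, by linarith⟩ hd
  subst hd0
  rw [add_zero] at hsum
  exact ⟨(mul_eq_zero.mp hsum).resolve_right hp, rfl⟩

lemma Module.Basis.eq_repr_smul_of_apply_eq_smul {ι R M : Type*} [CommRing R]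
    [NoZeroDivisors R] [AddCommGroup M] [Module R M] (b : Module.Basis ι R M)
    (f : M →ₗ[R] M) (w : ι → R) (hf : ∀ e, f (b e) = w e • b e) {μ : R} {x : M}
    (hx : f x = μ • x) {e₀ : ι} (hu : ∀ e, w e = μ → e = e₀) :
    x = b.repr x e₀ • b e₀ := by
  have hrepr : ∀ e, b.repr (f x) e = w e * b.repr x e := by
    intro e
    have hmap : Finsupp.lapply e ∘ₗ b.repr.toLinearMap ∘ₗ f =
        w e • (Finsupp.lapply e ∘ₗ b.repr.toLinearMap) := by
      refine b.ext fun e' => ?_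
      by_cases he : e' = e
      · subst he; simp [hf]
      · simp [hf, he]
    simpa using LinearMap.congr_fun hmap x
  refine b.ext_elem fun e => ?_
  by_cases he : e = e₀
  · subst he; simp
  · have hzero : (w e - μ) * b.repr x e = 0 := by
      rw [sub_mul, ← hrepr, hx]; simp
    have hw : w e - μ ≠ 0 := sub_ne_zero.mpr fun h => he (hu e h)
    simp [(mul_eq_zero.mp hzero).resolve_left hw, Ne.symm he]

namespace IsConjLinearAntiInvolution

variable {g : Type*} [LieRing g] [LieAlgebra ℂ g] {θ : g → g}

def toSemilinearMap (hθ : IsConjLinearAntiInvolution g θ) : g →ₛₗ[starRingEnd ℂ] g where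
  toFun := θ
  map_add' := hθ.map_add
  map_smul' := hθ.map_smul

lemma map_eq_zero_iff (hθ : IsConjLinearAntiInvolution g θ) {x : g} : θ x = 0 ↔ x = 0 := by
  have hzero : θ 0 = 0 := map_zero hθ.toSemilinearMap
  refine ⟨fun h => ?_, fun h => h ▸ hzero⟩
  rw [← hθ.invol x, h, hzero]

lemma lie_map_of_lie_eq_smul (hθ : IsConjLinearAntiInvolution g θ) {h c y : g} {lam μ : ℂ}
    (hlam : lam * lam = 1) (hc : ∀ x : g, ⁅c, x⁆ = 0) (hh : θ h = lam • h + c)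
    (hy : ⁅h, y⁆ = μ • y) : ⁅h, θ y⁆ = (-(lam * starRingEnd ℂ μ)) • θ y := by
  have hθy : lam • ⁅h, θ y⁆ = -(starRingEnd ℂ μ • θ y) := by
    rw [← hθ.map_smul, ← hy, hθ.map_lie, hh, lie_add, lie_smul, ← lie_skew (θ y) c, hc,
      neg_zero, add_zero, ← lie_skew (θ y) h, smul_neg, neg_neg]
  calc ⁅h, θ y⁆ = (lam * lam) • ⁅h, θ y⁆ := by rw [hlam, one_smul]
    _ = (-(lam * starRingEnd ℂ μ)) • θ y := by rw [mul_smul, hθy]; module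

lemma image_span_eq (hθ : IsConjLinearAntiInvolution g θ) {s : Set g}
    (hs : ∀ x ∈ s, θ x ∈ Submodule.span ℂ s) :
    θ '' Submodule.span ℂ s = Submodule.span ℂ s := by
  have hmaps : Set.MapsTo θ (Submodule.span ℂ s) (Submodule.span ℂ s) :=
    fun x hx => (Submodule.span_le (p := (Submodule.span ℂ s).comap hθ.toSemilinearMap)).mpr
      hs hx
  exact Set.SurjOn.image_eq_of_mapsTo (fun x hx => ⟨θ x, hmaps hx, hθ.invol x⟩) hmaps

end IsConjLinearAntiInvolution

namespace GapIdx

variable {p : ℕ}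

/-- The eigenvalue of `ad (L 0)` on the basis vector indexed by `e`. -/
noncomputable def weight : GapIdx p → ℂ
  | .L m => -(m : ℂ)
  | .I m i => -((m : ℂ) + (i.1 : ℂ) / (p : ℂ))
  | .C _ => 0

lemma eq_I_of_weight_eq {n : ℤ} {i : ℕ} (hi1 : 1 ≤ i) (hi2 : i ≤ p - 1) {e : GapIdx p}
    (he : e.weight = -((n : ℂ) + (i : ℂ) / (p : ℂ))) : e = .I n ⟨i, hi1, hi2⟩ := by
  cases e with
  | L m =>
    have := eq_zero_and_eq_zero_of_intCast_add_div_eq_zero (K := ℂ) (p := p) (a := m - n)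
      (d := -(i : ℤ)) (by rw [abs_neg, Nat.abs_cast]; omega)
      (by simp only [weight] at he; push_cast; linear_combination -he)
    omega
  | I m j =>
    obtain ⟨hj1, hj2⟩ := j.2
    obtain ⟨hm, hj⟩ := eq_zero_and_eq_zero_of_intCast_add_div_eq_zero (K := ℂ) (p := p) (a := m - n)
      (d := (j.1 : ℤ) - i) (by rw [abs_lt]; omega)
      (by simp only [weight] at he; push_cast; linear_combination -he)
    obtain rfl : m = n := by omega
    obtain rfl : j = ⟨i, hi1, hi2⟩ := Subtype.ext (show j.1 = i by omega)
    rfl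
  | C j =>
    have := eq_zero_and_eq_zero_of_intCast_add_div_eq_zero (K := ℂ) (p := p) (a := n) (d := i)
      (by rw [Nat.abs_cast]; omega) (by simp only [weight] at he; push_cast; linear_combination he)
    omega

end GapIdx

namespace GapVirasoro

variable {p : ℕ} {g : Type*} [LieRing g] [LieAlgebra ℂ g] (S : GapVirasoro p g)

lemma lie_L_zero_basis (e : GapIdx p) : ⁅S.L 0, S.basis e⁆ = e.weight • S.basis e := by
  cases e with
  | L m =>
    rw [S.basis_L, S.bracket_LL]
    by_cases hm : m = 0
    · subst hm; simp [GapIdx.weight]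
    · simp [GapIdx.weight, hm]
  | I m i =>
    rw [S.basis_I, S.bracket_LI 0 m i.1 i.2.1 i.2.2, zero_add]
    rfl
  | C j =>
    rw [S.basis_C, ← lie_skew, S.central_C j.1 (by omega), neg_zero, GapIdx.weight, zero_smul]

lemma I_ne_zero {n : ℤ} {i : ℕ} (hi1 : 1 ≤ i) (hi2 : i ≤ p - 1) : S.I n i ≠ 0 :=
  S.basis_I n ⟨i, hi1, hi2⟩ ▸ S.basis.ne_zero _

lemma exists_eq_smul_I_of_lie_L_zero {n : ℤ} {i : ℕ} (hi1 : 1 ≤ i) (hi2 : i ≤ p - 1) {x : g}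
    (hx : ⁅S.L 0, x⁆ = (-((n : ℂ) + (i : ℂ) / (p : ℂ))) • x) : ∃ c : ℂ, x = c • S.I n i := by
  refine ⟨_, S.basis_I n ⟨i, hi1, hi2⟩ ▸ S.basis.eq_repr_smul_of_apply_eq_smul
    (LieAlgebra.ad ℂ g (S.L 0)) GapIdx.weight S.lie_L_zero_basis hx
    fun e he => GapIdx.eq_I_of_weight_eq hi1 hi2 he⟩

lemma lie_eq_zero_of_mem_centerSub {c : g} (hc : c ∈ S.centerSub) (x : g) : ⁅c, x⁆ = 0 := by
  induction hc using Submodule.span_induction generalizing x with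
  | mem z hz => obtain ⟨j, hj, rfl⟩ := hz; exact S.central_C j hj x
  | zero => exact zero_lie x
  | add a b _ _ ha hb => rw [add_lie, ha, hb, add_zero]
  | smul a z _ hz => rw [smul_lie, hz, smul_zero]

lemma C_min {i : ℕ} (hi1 : 1 ≤ i) (hi2 : i ≤ p - 1) : S.C (min i (p - i)) = S.C i := by
  rcases le_total i (p - i) with h | h
  · rw [min_eq_left h]
  · rw [min_eq_right h, S.C_symm i hi1 hi2]

lemma lie_I_zero_I_neg_one {i : ℕ} (hi1 : 1 ≤ i) (hi2 : i ≤ p - 1) :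
    ⁅S.I 0 i, S.I (-1) (p - i)⁆ = ((i : ℂ) / p) • S.C i := by
  rw [S.bracket_II 0 (-1) i (p - i) hi1 hi2 (by omega) (by omega),
    if_pos ⟨by omega, by norm_num⟩, S.C_min hi1 hi2, Int.cast_zero, zero_add]

end GapVirasoro

namespace GapVirasoro

variable {p : ℕ} {g : Type*} [LieRing g] [LieAlgebra ℂ g] (S : GapVirasoro p g) {θ : g → g}

lemma exists_map_I_eq_smul_I (hθ : IsConjLinearAntiInvolution g θ) {lam : ℂ}
    (hlam : lam * lam = 1) {c0 : g} (hc0 : c0 ∈ S.centerSub)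
    (hL0 : θ (S.L 0) = lam • S.L 0 + c0) {n n' : ℤ} {i i' : ℕ} (hi1 : 1 ≤ i) (hi2 : i ≤ p - 1)
    (hi1' : 1 ≤ i') (hi2' : i' ≤ p - 1)
    (hweight : lam * ((n : ℂ) + (i : ℂ) / p) = -((n' : ℂ) + (i' : ℂ) / p)) :
    ∃ c : ℂ, c ≠ 0 ∧ θ (S.I n i) = c • S.I n' i' := by
  have hI : ⁅S.L 0, S.I n i⁆ = (-((n : ℂ) + (i : ℂ) / p)) • S.I n i := by
    rw [S.bracket_LI 0 n i hi1 hi2, zero_add]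
  have hθI := hθ.lie_map_of_lie_eq_smul hlam (S.lie_eq_zero_of_mem_centerSub hc0) hL0 hI
  simp only [map_neg, map_add, map_intCast, map_div₀, map_natCast, mul_neg, neg_neg,
    hweight] at hθI
  obtain ⟨c, hc⟩ := S.exists_eq_smul_I_of_lie_L_zero hi1' hi2' hθI
  refine ⟨c, ?_, hc⟩
  rintro rfl
  rw [zero_smul, hθ.map_eq_zero_iff] at hc
  exact S.I_ne_zero hi1 hi2 hc

lemma exists_coeff_map_I_of_eq_one (hθ : IsConjLinearAntiInvolution g θ) {lam : ℂ}
    (hlam : lam = 1) {c0 : g} (hc0 : c0 ∈ S.centerSub) (hL0 : θ (S.L 0) = lam • S.L 0 + c0) :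
    ∃ A : ℤ → ℕ → ℂ, (∀ (n : ℤ) (i : ℕ), 1 ≤ i → i ≤ p - 1 → A n i ≠ 0) ∧
      ∀ (n : ℤ) (i : ℕ), 1 ≤ i → i ≤ p - 1 →
        θ (S.I n i) = A (-n - 1) (p - i) • S.I (-n - 1) (p - i) := by
  subst hlam
  choose! B hB0 hB using fun (n : ℤ) (i : ℕ) (hi1 : 1 ≤ i) (hi2 : i ≤ p - 1) =>
    S.exists_map_I_eq_smul_I hθ (one_mul 1) hc0 hL0 (n' := -n - 1) (i' := p - i) hi1 hi2
      (by omega) (by omega) (by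
        have hp : (p : ℂ) ≠ 0 := by norm_cast; omega
        push_cast [Nat.cast_sub (show i ≤ p by omega)]
        field_simp
        ring)
  refine ⟨fun n i => B (-n - 1) (p - i), fun n i hi1 hi2 => hB0 _ _ (by omega) (by omega),
    fun n i hi1 hi2 => ?_⟩
  simpa [show p - (p - i) = i by omega] using hB n i hi1 hi2

lemma exists_coeff_map_I_of_eq_neg_one (hθ : IsConjLinearAntiInvolution g θ) {lam : ℂ}
    (hlam : lam = -1) {c0 : g} (hc0 : c0 ∈ S.centerSub) (hL0 : θ (S.L 0) = lam • S.L 0 + c0) :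
    ∃ A : ℤ → ℕ → ℂ, (∀ (n : ℤ) (i : ℕ), 1 ≤ i → i ≤ p - 1 → A n i ≠ 0) ∧
      ∀ (n : ℤ) (i : ℕ), 1 ≤ i → i ≤ p - 1 → θ (S.I n i) = A n i • S.I n i := by
  subst hlam
  choose! A hA0 hA using fun (n : ℤ) (i : ℕ) (hi1 : 1 ≤ i) (hi2 : i ≤ p - 1) =>
    S.exists_map_I_eq_smul_I hθ (by norm_num) hc0 hL0 hi1 hi2 hi1 hi2 (by ring)
  exact ⟨A, hA0, hA⟩

lemma smul_map_C (hθ : IsConjLinearAntiInvolution g θ) {i : ℕ} (hi1 : 1 ≤ i)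
    (hi2 : i ≤ p - 1) :
    ((i : ℂ) / p) • θ (S.C i) = ⁅θ (S.I (-1) (p - i)), θ (S.I 0 i)⁆ := by
  rw [← hθ.map_lie, S.lie_I_zero_I_neg_one hi1 hi2, hθ.map_smul, map_div₀, map_natCast,
    map_natCast]

lemma map_C_of_map_I_eq_smul_dual (hθ : IsConjLinearAntiInvolution g θ) {A : ℤ → ℕ → ℂ}
    (hA : ∀ (n : ℤ) (i : ℕ), 1 ≤ i → i ≤ p - 1 →
      θ (S.I n i) = A (-n - 1) (p - i) • S.I (-n - 1) (p - i))
    {i : ℕ} (hi1 : 1 ≤ i) (hi2 : i ≤ p - 1) :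
    θ (S.C i) = (A 0 i * A (-1) (p - i)) • S.C i := by
  have hip : (i : ℂ) / p ≠ 0 := div_ne_zero (by norm_cast; omega) (by norm_cast; omega)
  refine smul_right_injective g hip ?_
  have hI : θ (S.I (-1) (p - i)) = A 0 i • S.I 0 i := by
    simpa [show p - (p - i) = i by omega] using hA (-1) (p - i) (by omega) (by omega)
  simp only
  rw [S.smul_map_C hθ hi1 hi2, hI, hA 0 i hi1 hi2, smul_lie, lie_smul, neg_zero, zero_sub,
    S.lie_I_zero_I_neg_one hi1 hi2]
  module

lemma map_C_of_map_I_eq_smul_self (hθ : IsConjLinearAntiInvolution g θ) {A : ℤ → ℕ → ℂ}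
    (hA : ∀ (n : ℤ) (i : ℕ), 1 ≤ i → i ≤ p - 1 → θ (S.I n i) = A n i • S.I n i)
    {i : ℕ} (hi1 : 1 ≤ i) (hi2 : i ≤ p - 1) :
    θ (S.C i) = (-(A 0 i * A (-1) (p - i))) • S.C i := by
  have hip : (i : ℂ) / p ≠ 0 := div_ne_zero (by norm_cast; omega) (by norm_cast; omega)
  refine smul_right_injective g hip ?_
  simp only
  rw [S.smul_map_C hθ hi1 hi2, hA (-1) (p - i) (by omega) (by omega), hA 0 i hi1 hi2,
    smul_lie, lie_smul, ← lie_skew, S.lie_I_zero_I_neg_one hi1 hi2]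
  module


lemma I_mem_heisSub (n : ℤ) {i : ℕ} (hi1 : 1 ≤ i) (hi2 : i ≤ p - 1) : S.I n i ∈ S.heisSub :=
  Submodule.subset_span (Or.inl ⟨n, i, hi1, hi2, rfl⟩)

lemma C_mem_heisSub {i : ℕ} (hi1 : 1 ≤ i) (hi2 : i ≤ p - 1) : S.C i ∈ S.heisSub :=
  Submodule.subset_span (Or.inr ⟨i, hi1, hi2, rfl⟩)

lemma image_heisSub_eq (hθ : IsConjLinearAntiInvolution g θ)
    (hI : ∀ (n : ℤ) (i : ℕ), 1 ≤ i → i ≤ p - 1 → θ (S.I n i) ∈ S.heisSub)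
    (hC : ∀ i : ℕ, 1 ≤ i → i ≤ p - 1 → θ (S.C i) ∈ S.heisSub) :
    θ '' (S.heisSub : Set g) = (S.heisSub : Set g) :=
  hθ.image_span_eq <| by
    rintro _ (⟨n, i, hi1, hi2, rfl⟩ | ⟨i, hi1, hi2, rfl⟩)
    exacts [hI n i hi1 hi2, hC i hi1 hi2]

end GapVirasoro

theorem anti_involution_heisenberg_general {p : ℕ} {g : Type u} [LieRing g]
    [LieAlgebra ℂ g] (S : GapVirasoro p g) (θ : g → g)
    (hθ : IsConjLinearAntiInvolution g θ)
    (lam : ℂ) (hlam : lam = 1 ∨ lam = -1) (c0 : g) (hc0 : c0 ∈ S.centerSub)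
    (hL0 : θ (S.L 0) = lam • S.L 0 + c0) :
    ∃ A : ℤ → ℕ → ℂ,
      (∀ (n : ℤ) (i : ℕ), 1 ≤ i → i ≤ p - 1 → A n i ≠ 0) ∧
      (lam = 1 → ∀ (n : ℤ) (i : ℕ), 1 ≤ i → i ≤ p - 1 →
        θ (S.I n i) = A (-n - 1) (p - i) • S.I (-n - 1) (p - i)) ∧
      (lam = -1 → ∀ (n : ℤ) (i : ℕ), 1 ≤ i → i ≤ p - 1 →
        θ (S.I n i) = A n i • S.I n i) ∧
      (∀ i : ℕ, 1 ≤ i → i ≤ p - 1 →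
        θ (S.C i) = (lam * A 0 i * A (-1) (p - i)) • S.C i) ∧
      θ '' (S.heisSub : Set g) = (S.heisSub : Set g) := by
  have hC_mem {a : ℂ} {i : ℕ} (hi1 : 1 ≤ i) (hi2 : i ≤ p - 1) : a • S.C i ∈ S.heisSub :=
    Submodule.smul_mem _ _ (S.C_mem_heisSub hi1 hi2)
  rcases hlam with rfl | rfl
  · obtain ⟨A, hA0, hA⟩ := S.exists_coeff_map_I_of_eq_one hθ rfl hc0 hL0
    have hC {i : ℕ} := S.map_C_of_map_I_eq_smul_dual hθ hA (i := i)
    refine ⟨A, hA0, fun _ => hA, by norm_num, fun i hi1 hi2 => by rw [hC hi1 hi2, one_mul],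
      S.image_heisSub_eq hθ (fun n i hi1 hi2 => ?_) fun i hi1 hi2 => hC hi1 hi2 ▸ hC_mem hi1 hi2⟩
    exact hA n i hi1 hi2 ▸ Submodule.smul_mem _ _ (S.I_mem_heisSub _ (by omega) (by omega))
  · obtain ⟨A, hA0, hA⟩ := S.exists_coeff_map_I_of_eq_neg_one hθ rfl hc0 hL0
    have hC {i : ℕ} := S.map_C_of_map_I_eq_smul_self hθ hA (i := i)
    refine ⟨A, hA0, by norm_num, fun _ => hA,
      fun i hi1 hi2 => by rw [hC hi1 hi2, neg_one_mul, neg_mul],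
      S.image_heisSub_eq hθ (fun n i hi1 hi2 => ?_) fun i hi1 hi2 => hC hi1 hi2 ▸ hC_mem hi1 hi2⟩
    exact hA n i hi1 hi2 ▸ Submodule.smul_mem _ _ (S.I_mem_heisSub _ hi1 hi2)

/-- Values of a conjugate-linear anti-involution on the `I n i` and `C i`,
according to the sign `λ` appearing in `θ(L 0) = λ L 0 + C(L 0)`; in particular `θ(ℋ) = ℋ`. -/
theorem anti_involution_heisenberg {p : ℕ} (hp : 1 < p) {g : Type u} [LieRing g]
    [LieAlgebra ℂ g] (S : GapVirasoro p g) (θ : g → g)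
    (hθ : IsConjLinearAntiInvolution g θ)
    (lam : ℂ) (hlam : lam = 1 ∨ lam = -1) (c0 : g) (hc0 : c0 ∈ S.centerSub)
    (hL0 : θ (S.L 0) = lam • S.L 0 + c0) :
    ∃ A : ℤ → ℕ → ℂ,
      (∀ (n : ℤ) (i : ℕ), 1 ≤ i → i ≤ p - 1 → A n i ≠ 0) ∧
      (lam = 1 → ∀ (n : ℤ) (i : ℕ), 1 ≤ i → i ≤ p - 1 →
        θ (S.I n i) = A (-n - 1) (p - i) • S.I (-n - 1) (p - i)) ∧
      (lam = -1 → ∀ (n : ℤ) (i : ℕ), 1 ≤ i → i ≤ p - 1 →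
        θ (S.I n i) = A n i • S.I n i) ∧
      (∀ i : ℕ, 1 ≤ i → i ≤ p - 1 →
        θ (S.C i) = (lam * A 0 i * A (-1) (p - i)) • S.C i) ∧
      θ '' (S.heisSub : Set g) = (S.heisSub : Set g) :=
  anti_involution_heisenberg_general S θ hθ lam hlam c0 hc0 hL0
end
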